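/- arXiv:2007.05844 — 2 statements merged into one kernel-verified Lean document; each statement's English description precedes it below -/
import Mathlib

section
/- If there exists a mad family of true cardinality 𝔠, then there exists a mad family 𝒜 of true cardinality 𝔠 on ℕ together with a countably infinite subfamily 𝒞 ⊆ 𝒜 and an infinite set W ⊆ ℕ such that cl_{Ψ(𝒜)}(W) ∩ 𝒜 = 𝒜 ∖ 𝒞. In particular, the existence of a mad family of true cardinality 𝔠 implies the existence of a non-almost-normal mad family of true cardinality 𝔠. -/
open Set

namespace PsiSpace

/-- An (infinite) almost disjoint family of infinite subsets of ℕ. -/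
def AlmostDisjoint (𝒜 : Set (Set ℕ)) : Prop :=
  𝒜.Infinite ∧ (∀ a ∈ 𝒜, a.Infinite) ∧
    ∀ a ∈ 𝒜, ∀ b ∈ 𝒜, a ≠ b → (a ∩ b).Finite

/-- A maximal almost disjoint family. -/
def MadFamily (𝒜 : Set (Set ℕ)) : Prop :=
  AlmostDisjoint 𝒜 ∧ ∀ X : Set ℕ, X.Infinite → ∃ a ∈ 𝒜, (a ∩ X).Infinite

/-- 𝒜↾B = {a ∈ 𝒜 : a ∩ B infinite}. -/
def ADRestrict (𝒜 : Set (Set ℕ)) (B : Set ℕ) : Set (Set ℕ) :=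
  {a | a ∈ 𝒜 ∧ (a ∩ B).Infinite}

/-- 𝒜 has true cardinality 𝔠. -/
def TrueCardContinuum (𝒜 : Set (Set ℕ)) : Prop :=
  ∀ B : Set ℕ, (ADRestrict 𝒜 B).Finite ∨ Cardinal.mk ↥(ADRestrict 𝒜 B) = Cardinal.continuum

/-- The underlying set of the Mrówka–Isbell space Ψ(𝒜): ℕ together with the members of 𝒜. -/
def Psi (𝒜 : Set (Set ℕ)) : Type := ℕ ⊕ {a : Set ℕ // a ∈ 𝒜}

/-- The isolated point of Ψ(𝒜) corresponding to n ∈ ℕ. -/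
def Psi.nat {𝒜 : Set (Set ℕ)} (n : ℕ) : Psi 𝒜 := Sum.inl n

/-- The point of Ψ(𝒜) corresponding to a ∈ 𝒜. -/
def Psi.pt {𝒜 : Set (Set ℕ)} (a : {a : Set ℕ // a ∈ 𝒜}) : Psi 𝒜 := Sum.inr a

/-- The Mrówka–Isbell topology: each n ∈ ℕ is isolated, and basic neighbourhoods of a ∈ 𝒜
are {a} ∪ (a \ F) for F finite. Equivalently, U is open iff for every a ∈ 𝒜 with a ∈ U,
all but finitely many elements of a belong to U. -/
instance psiTop (𝒜 : Set (Set ℕ)) : TopologicalSpace (Psi 𝒜) where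
  IsOpen U := ∀ a : {a : Set ℕ // a ∈ 𝒜}, Psi.pt a ∈ U →
    {n : ℕ | n ∈ a.1 ∧ Psi.nat n ∉ U}.Finite
  isOpen_univ := fun a _ => by
    convert Set.finite_empty using 1
    ext n
    simp [Set.mem_univ]
  isOpen_inter := fun U V hU hV a ha => by
    refine ((hU a ha.1).union (hV a ha.2)).subset ?_
    rintro n ⟨hn, hnUV⟩
    by_cases h : Psi.nat n ∈ U
    · exact Or.inr ⟨hn, fun h' => hnUV ⟨h, h'⟩⟩
    · exact Or.inl ⟨hn, h⟩
  isOpen_sUnion := fun S hS a ha => by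
    obtain ⟨U, hUS, haU⟩ := ha
    exact (hS U hUS a haU).subset fun n hn => ⟨hn.1, fun h => hn.2 ⟨U, hUS, h⟩⟩

/-- The copy of a set W ⊆ ℕ inside Ψ(𝒜). -/
def PsiNat (𝒜 : Set (Set ℕ)) (W : Set ℕ) : Set (Psi 𝒜) := {x | ∃ n ∈ W, x = Psi.nat n}

/-- The copy of a subfamily 𝒞 ⊆ 𝒜 inside Ψ(𝒜). -/
def PsiSub (𝒜 𝒞 : Set (Set ℕ)) : Set (Psi 𝒜) :=
  {x | ∃ a : {a : Set ℕ // a ∈ 𝒜}, a.1 ∈ 𝒞 ∧ x = Psi.pt a}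

/-- A and B are separated by disjoint open sets. -/
def SepOpen {X : Type*} [TopologicalSpace X] (A B : Set X) : Prop :=
  ∃ U V : Set X, IsOpen U ∧ IsOpen V ∧ A ⊆ U ∧ B ⊆ V ∧ Disjoint U V

/-- Regular closed (closed domain): A is the closure of its interior. -/
def RegClosed {X : Type*} [TopologicalSpace X] (A : Set X) : Prop :=
  closure (interior A) = A

/-- π-closed: a finite intersection of regular closed sets. -/
def PiClosed {X : Type*} [TopologicalSpace X] (A : Set X) : Prop :=
  ∃ S : Finset (Set X), (∀ B ∈ S, RegClosed B) ∧ A = ⋂₀ ↑S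

/-- A is an intersection of at most n regular closed sets. -/
def InterOfAtMost {X : Type*} [TopologicalSpace X] (n : ℕ) (A : Set X) : Prop :=
  ∃ S : Finset (Set X), S.card ≤ n ∧ (∀ B ∈ S, RegClosed B) ∧ A = ⋂₀ ↑S

/-- Almost-normal: disjoint closed + regular closed sets are separated. -/
def AlmostNormal (X : Type*) [TopologicalSpace X] : Prop :=
  ∀ A B : Set X, IsClosed A → RegClosed B → Disjoint A B → SepOpen A B

/-- π-normal: disjoint closed + π-closed sets are separated. -/
def PiNormal (X : Type*) [TopologicalSpace X] : Prop :=
  ∀ A B : Set X, IsClosed A → PiClosed B → Disjoint A B → SepOpen A B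

/-- Quasi-normal: disjoint π-closed sets are separated. -/
def QuasiNormal (X : Type*) [TopologicalSpace X] : Prop :=
  ∀ A B : Set X, PiClosed A → PiClosed B → Disjoint A B → SepOpen A B

/-- Mildly-normal: disjoint regular closed sets are separated. -/
def MildlyNormal (X : Type*) [TopologicalSpace X] : Prop :=
  ∀ A B : Set X, RegClosed A → RegClosed B → Disjoint A B → SepOpen A B

/-- Partly-normal: disjoint regular closed + π-closed sets are separated. -/
def PartlyNormal (X : Type*) [TopologicalSpace X] : Prop :=
  ∀ A B : Set X, RegClosed A → PiClosed B → Disjoint A B → SepOpen A B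

/-- n-partly-normal: disjoint regular closed + (intersection of at most n regular closed)
sets are separated. -/
def NPartlyNormal (n : ℕ) (X : Type*) [TopologicalSpace X] : Prop :=
  ∀ A B : Set X, RegClosed A → InterOfAtMost n B → Disjoint A B → SepOpen A B

/-- 𝓘⁺(𝒜): the sets B ⊆ ℕ with 𝒜↾B infinite. -/
def IPlus (𝒜 : Set (Set ℕ)) : Set (Set ℕ) := {B | (ADRestrict 𝒜 B).Infinite}

/-- Completely separable almost disjoint family. -/
def CompletelySeparable (𝒜 : Set (Set ℕ)) : Prop :=
  ∀ B ∈ IPlus 𝒜, ∃ a ∈ 𝒜, a ⊆ B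

/-- A Luzin family: it can be enumerated as ⟨a_α : α < ω₁⟩ so that for each α < ω₁ and
n ∈ ℕ, the set {β < α : a_α ∩ a_β ⊆ n} is finite. -/
def LuzinFamily (𝒜 : Set (Set ℕ)) : Prop :=
  ∃ a : Ordinal.{0} → Set ℕ,
    (∀ α, α < (Cardinal.aleph 1).ord → a α ∈ 𝒜) ∧
    (∀ x ∈ 𝒜, ∃ α, α < (Cardinal.aleph 1).ord ∧ a α = x) ∧
    (∀ α, α < (Cardinal.aleph 1).ord → ∀ β, β < (Cardinal.aleph 1).ord → α ≠ β → a α ≠ a β) ∧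
    ∀ α, α < (Cardinal.aleph 1).ord → ∀ n : ℕ,
      {β : Ordinal.{0} | β < α ∧ a α ∩ a β ⊆ Set.Iio n}.Finite

/-- Strongly ℵ₀-separated almost disjoint family. -/
def StronglyAleph0Separated (𝒜 : Set (Set ℕ)) : Prop :=
  ∀ A B : Set (Set ℕ), A ⊆ 𝒜 → B ⊆ 𝒜 → A.Countable → A.Infinite →
    B.Countable → B.Infinite → Disjoint A B →
    ∃ X : Set ℕ,
      (∀ a ∈ 𝒜, (a \ X).Finite ∨ (a ∩ X).Finite) ∧
      (∀ a ∈ A, (a \ X).Finite) ∧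
      (∀ a ∈ B, (a ∩ X).Finite)

lemma isOpen_iff' {𝒜 : Set (Set ℕ)} (U : Set (Psi 𝒜)) :
    IsOpen U ↔ ∀ a : {a : Set ℕ // a ∈ 𝒜}, Psi.pt a ∈ U →
      {n : ℕ | n ∈ a.1 ∧ Psi.nat n ∉ U}.Finite := Iff.rfl

lemma psi_nat_ne_pt {𝒜 : Set (Set ℕ)} (n : ℕ) (a : {a : Set ℕ // a ∈ 𝒜}) :
    (Psi.nat n : Psi 𝒜) ≠ Psi.pt a := by
  intro h
  exact Sum.inl_ne_inr h

lemma psi_nat_inj {𝒜 : Set (Set ℕ)} : Function.Injective (Psi.nat (𝒜 := 𝒜)) := by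
  intro a b h
  exact Sum.inl_injective h

lemma psi_pt_inj {𝒜 : Set (Set ℕ)} : Function.Injective (Psi.pt (𝒜 := 𝒜)) := by
  intro a b h
  exact Sum.inr_injective h


lemma isOpen_psiNat (𝒜 : Set (Set ℕ)) (W : Set ℕ) : IsOpen (PsiNat 𝒜 W) := by
  rw [isOpen_iff']
  intro a ha
  obtain ⟨n, _, hn⟩ := ha
  exact absurd hn.symm (psi_nat_ne_pt n a)

lemma isClosed_psiSub (𝒜 𝒞 : Set (Set ℕ)) : IsClosed (PsiSub 𝒜 𝒞) := by
  rw [← isOpen_compl_iff, isOpen_iff']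
  intro a _
  convert Set.finite_empty using 1
  ext n
  simp only [Set.mem_setOf_eq, Set.mem_empty_iff_false, iff_false, not_and, not_not]
  intro _ hn
  exact absurd hn (fun h => by obtain ⟨b, _, hb⟩ := h; exact psi_nat_ne_pt n b hb)

lemma regClosed_closure_of_isOpen {X : Type*} [TopologicalSpace X] {S : Set X}
    (h : IsOpen S) : RegClosed (closure S) := by
  refine le_antisymm ?_ ?_
  · exact closure_minimal interior_subset isClosed_closure
  · exact closure_mono (h.subset_interior_iff.mpr subset_closure)

lemma pt_mem_closure_psiNat_iff {𝒜 : Set (Set ℕ)} (W : Set ℕ) (a : {a : Set ℕ // a ∈ 𝒜}) :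
    Psi.pt a ∈ closure (PsiNat 𝒜 W) ↔ (a.1 ∩ W).Infinite := by
  constructor
  · intro h
    by_contra hfin
    rw [Set.not_infinite] at hfin
    set U : Set (Psi 𝒜) := {Psi.pt a} ∪ {x | ∃ m ∈ a.1 \ W, x = Psi.nat m} with hU
    have hUopen : IsOpen U := by
      rw [isOpen_iff']
      intro b hb
      have hba : b = a := by
        rcases hb with hb | ⟨m, _, hm⟩
        · exact psi_pt_inj (Set.mem_singleton_iff.mp hb)
        · exact absurd hm.symm (psi_nat_ne_pt m b)
      subst hba
      refine hfin.subset ?_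
      rintro n ⟨hn, hnU⟩
      refine ⟨hn, by_contra fun hw => hnU (Or.inr ⟨n, ⟨hn, hw⟩, rfl⟩)⟩
    have := (mem_closure_iff.mp h) U hUopen (Or.inl rfl)
    obtain ⟨x, hxU, m, hmW, hx⟩ := this
    subst hx
    rcases hxU with hx | ⟨k, hk, hkm⟩
    · exact psi_nat_ne_pt m a hx
    · exact hk.2 (psi_nat_inj hkm ▸ hmW)
  · intro hinf
    rw [mem_closure_iff]
    intro U hUopen haU
    have hfin := (isOpen_iff' U).mp hUopen a haU
    obtain ⟨m, hm⟩ := (hinf.diff hfin).nonempty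
    exact ⟨Psi.nat m, by_contra fun hc => hm.2 ⟨hm.1.1, fun h => hc h⟩, ⟨m, hm.1.2, rfl⟩⟩


lemma not_sepOpen {𝒜 : Set (Set ℕ)} (hmad : MadFamily 𝒜) {𝒞 : Set (Set ℕ)} (h𝒞 : 𝒞 ⊆ 𝒜)
    (e : ℕ → Set ℕ) (he_inj : Function.Injective e) (he : Set.range e = 𝒞)
    {W : Set ℕ} (hW : ∀ a ∈ 𝒜, a ∉ 𝒞 → (a ∩ W).Infinite) :
    ¬ SepOpen (PsiSub 𝒜 𝒞) (closure (PsiNat 𝒜 W)) := by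
  rintro ⟨U, V, hUo, hVo, hAU, hBV, hdisj⟩
  have heC : ∀ n, e n ∈ 𝒞 := fun n => he ▸ ⟨n, rfl⟩
  have heA : ∀ n, e n ∈ 𝒜 := fun n => h𝒞 (heC n)
  have hptU : ∀ n, (Psi.pt ⟨e n, heA n⟩ : Psi 𝒜) ∈ U :=
    fun n => hAU ⟨⟨e n, heA n⟩, heC n, rfl⟩
  have hFn : ∀ n : ℕ, {m : ℕ | m ∈ e n ∧ (Psi.nat m : Psi 𝒜) ∉ U}.Finite :=
    fun n => (isOpen_iff' U).mp hUo ⟨e n, heA n⟩ (hptU n)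
  set T : ℕ → Set ℕ := fun n =>
    e n \ ({m : ℕ | m ∈ e n ∧ (Psi.nat m : Psi 𝒜) ∉ U} ∪ ⋃ j ∈ Finset.range n, e n ∩ e j)
    with hT
  have hTinf : ∀ n, (T n).Infinite := by
    intro n
    refine (hmad.1.2.1 (e n) (heA n)).diff ?_
    refine (hFn n).union (Set.Finite.biUnion (Finset.range n).finite_toSet ?_)
    intro j hj
    simp only [Finset.coe_range, Set.mem_Iio] at hj
    exact hmad.1.2.2 (e n) (heA n) (e j) (heA j) (fun hh => (Nat.ne_of_gt hj) (he_inj hh))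
  choose x hx using fun n => (hTinf n).nonempty
  have hx1 : ∀ n, x n ∈ e n := fun n => (hx n).1
  have hx2 : ∀ n, (Psi.nat (x n) : Psi 𝒜) ∈ U := by
    intro n
    by_contra hc
    exact (hx n).2 (Or.inl ⟨(hx n).1, hc⟩)
  have hx3 : ∀ n j, j < n → x n ∉ e j := by
    intro n j hj hmem
    exact (hx n).2 (Or.inr (Set.mem_biUnion (Finset.mem_range.mpr hj) ⟨(hx n).1, hmem⟩))
  have hxinj : Function.Injective x := by
    intro n m hnm
    by_contra hne
    rcases Nat.lt_or_ge n m with hlt | hge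
    · exact hx3 m n hlt (hnm ▸ hx1 n)
    · exact hx3 n m (Nat.lt_of_le_of_ne hge (Ne.symm hne)) (hnm.symm ▸ hx1 m)
  obtain ⟨a, haA, haX⟩ := hmad.2 (Set.range x) (Set.infinite_range_of_injective hxinj)
  by_cases haC : a ∈ 𝒞
  · obtain ⟨k, hk⟩ := he ▸ haC
    refine haX ?_
    refine (Set.finite_Iic k).image x |>.subset ?_
    rintro m ⟨hma, n, rfl⟩
    refine ⟨n, ?_, rfl⟩
    by_contra hnk
    exact hx3 n k (Nat.lt_of_not_le fun hh => hnk (Set.mem_Iic.mpr hh)) (hk ▸ hma)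
  · have hclo : (Psi.pt ⟨a, haA⟩ : Psi 𝒜) ∈ closure (PsiNat 𝒜 W) :=
      (pt_mem_closure_psiNat_iff W ⟨a, haA⟩).mpr (hW a haA haC)
    have hptV : (Psi.pt ⟨a, haA⟩ : Psi 𝒜) ∈ V := hBV hclo
    have hG : {m : ℕ | m ∈ a ∧ (Psi.nat m : Psi 𝒜) ∉ V}.Finite :=
      (isOpen_iff' V).mp hVo ⟨a, haA⟩ hptV
    obtain ⟨m, hm⟩ := (haX.diff hG).nonempty
    have hmV : (Psi.nat m : Psi 𝒜) ∈ V := by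
      by_contra hc
      exact hm.2 ⟨hm.1.1, hc⟩
    obtain ⟨n, rfl⟩ := hm.1.2
    exact (Set.disjoint_left.mp hdisj (hx2 n)) hmV


lemma mk_diff_countable {s t : Set (Set ℕ)} (hs : Cardinal.mk ↥s = Cardinal.continuum)
    (ht : t.Countable) : Cardinal.mk ↥(s \ t) = Cardinal.continuum := by
  refine le_antisymm (hs ▸ Cardinal.mk_le_mk_of_subset Set.diff_subset) ?_
  by_contra hlt
  rw [not_le] at hlt
  have h1 : Cardinal.mk ↥s ≤ Cardinal.mk ↥(s \ t) + Cardinal.mk ↥(s ∩ t) := by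
    refine le_trans (Cardinal.mk_le_mk_of_subset ?_) (Cardinal.mk_union_le _ _)
    intro x hx
    by_cases hxt : x ∈ t
    · exact Or.inr ⟨hx, hxt⟩
    · exact Or.inl ⟨hx, hxt⟩
  have h2 : Cardinal.mk ↥(s ∩ t) ≤ Cardinal.aleph0 :=
    Cardinal.le_aleph0_iff_set_countable.mpr (ht.mono Set.inter_subset_right)
  have h3 : Cardinal.mk ↥(s \ t) + Cardinal.mk ↥(s ∩ t) < Cardinal.continuum :=
    Cardinal.add_lt_of_lt Cardinal.aleph0_le_continuum hlt
      (lt_of_le_of_lt h2 Cardinal.aleph0_lt_continuum)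
  exact absurd (hs ▸ h1) (not_le.mpr h3)

lemma mk_set_nat_le (s : Set (Set ℕ)) : Cardinal.mk ↥s ≤ Cardinal.continuum := by
  refine le_trans (Cardinal.mk_set_le s) ?_
  rw [Cardinal.mk_set, Cardinal.mk_nat, Cardinal.two_power_aleph0]

lemma adRestrict_image {f : ℕ → ℕ} (hf : Function.Injective f) (A0 : Set (Set ℕ))
    (B : Set ℕ) :
    ADRestrict (Set.image f '' A0) B = Set.image f '' ADRestrict A0 (f ⁻¹' B) := by
  have key : ∀ a : Set ℕ, (f '' a ∩ B).Infinite ↔ (a ∩ f ⁻¹' B).Infinite := by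
    intro a
    rw [← Set.image_inter_preimage f a B, Set.infinite_image_iff hf.injOn]
  ext x
  constructor
  · rintro ⟨⟨a, ha, rfl⟩, hinf⟩
    exact ⟨a, ⟨ha, (key a).mp hinf⟩, rfl⟩
  · rintro ⟨a, ⟨ha, hinf⟩, rfl⟩
    exact ⟨⟨a, ha, rfl⟩, (key a).mpr hinf⟩

lemma trueCard_image {f : ℕ → ℕ} (hf : Function.Injective f) {A0 : Set (Set ℕ)}
    (htc : TrueCardContinuum A0) (B : Set ℕ) :
    (ADRestrict (Set.image f '' A0) B).Finite ∨
      Cardinal.mk ↥(ADRestrict (Set.image f '' A0) B) = Cardinal.continuum := by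
  rw [adRestrict_image hf]
  rcases htc (f ⁻¹' B) with hfin | hcard
  · exact Or.inl (hfin.image _)
  · refine Or.inr ?_
    rw [Cardinal.mk_image_eq (Set.image_injective.mpr hf), hcard]

def fE : ℕ → ℕ := fun n => 2 * n
def fO : ℕ → ℕ := fun n => 2 * n + 1

lemma fE_inj : Function.Injective fE := fun a b h => by simp only [fE] at h; omega
lemma fO_inj : Function.Injective fO := fun a b h => by simp only [fO] at h; omega
lemma range_disj {m : ℕ} (h1 : m ∈ Set.range fE) (h2 : m ∈ Set.range fO) : False := by
  obtain ⟨a, ha⟩ := h1; obtain ⟨b, hb⟩ := h2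
  simp only [fE, fO] at ha hb; omega

lemma construction {A0 : Set (Set ℕ)} (hmad0 : MadFamily A0) (htc0 : TrueCardContinuum A0) :
    ∃ 𝒜, MadFamily 𝒜 ∧ TrueCardContinuum 𝒜 ∧
      ∃ 𝒞 ⊆ 𝒜, 𝒞.Countable ∧ 𝒞.Infinite ∧
      (∃ e : ℕ → Set ℕ, Function.Injective e ∧ Set.range e = 𝒞) ∧
      ∃ W : Set ℕ, W.Infinite ∧ (∀ c ∈ 𝒞, (c ∩ W).Finite) ∧
        (∀ a ∈ 𝒜, a ∉ 𝒞 → (a ∩ W).Infinite) := by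
  obtain ⟨⟨h0inf, h0mem, h0ad⟩, h0max⟩ := hmad0
  set B1 : Set (Set ℕ) := Set.image fE '' A0 with hB1def
  set A1 : Set (Set ℕ) := Set.image fO '' A0 with hA1def
  have hB1mem : ∀ b ∈ B1, b.Infinite := by
    rintro _ ⟨a, ha, rfl⟩
    exact (Set.infinite_image_iff fE_inj.injOn).mpr (h0mem a ha)
  have hA1mem : ∀ b ∈ A1, b.Infinite := by
    rintro _ ⟨a, ha, rfl⟩
    exact (Set.infinite_image_iff fO_inj.injOn).mpr (h0mem a ha)
  have hB1sub : ∀ b ∈ B1, b ⊆ Set.range fE := by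
    rintro _ ⟨a, ha, rfl⟩; exact Set.image_subset_range _ _
  have hA1sub : ∀ b ∈ A1, b ⊆ Set.range fO := by
    rintro _ ⟨a, ha, rfl⟩; exact Set.image_subset_range _ _
  have hB1ad : ∀ b ∈ B1, ∀ b' ∈ B1, b ≠ b' → (b ∩ b').Finite := by
    rintro _ ⟨a, ha, rfl⟩ _ ⟨a', ha', rfl⟩ hne
    rw [← Set.image_inter fE_inj]
    exact (h0ad a ha a' ha' (fun h => hne (h ▸ rfl))).image _
  have hA1ad : ∀ b ∈ A1, ∀ b' ∈ A1, b ≠ b' → (b ∩ b').Finite := by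
    rintro _ ⟨a, ha, rfl⟩ _ ⟨a', ha', rfl⟩ hne
    rw [← Set.image_inter fO_inj]
    exact (h0ad a ha a' ha' (fun h => hne (h ▸ rfl))).image _
  have hmkA0 : Cardinal.mk ↥A0 = Cardinal.continuum := by
    have heq : ADRestrict A0 Set.univ = A0 := by
      ext a
      exact ⟨fun h => h.1, fun h => ⟨h, by simpa using h0mem a h⟩⟩
    rcases htc0 Set.univ with hfin | hcard
    · rw [heq] at hfin; exact absurd hfin h0inf
    · rw [heq] at hcard; exact hcard
  have hmkB1 : Cardinal.mk ↥B1 = Cardinal.continuum := by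
    rw [hB1def, Cardinal.mk_image_eq (Set.image_injective.mpr fE_inj), hmkA0]
  have hmkA1 : Cardinal.mk ↥A1 = Cardinal.continuum := by
    rw [hA1def, Cardinal.mk_image_eq (Set.image_injective.mpr fO_inj), hmkA0]
  have hB1inf : B1.Infinite :=
    (Set.infinite_image_iff (Set.image_injective.mpr fE_inj).injOn).mpr h0inf
  set e0 : ℕ → Set ℕ := fun n => ((Set.Infinite.natEmbedding B1 hB1inf) n : Set ℕ) with he0def
  have he0inj : Function.Injective e0 :=
    Subtype.val_injective.comp (Set.Infinite.natEmbedding B1 hB1inf).injective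
  set C : Set (Set ℕ) := Set.range e0 with hCdef
  have hCsubB1 : C ⊆ B1 := by rintro _ ⟨n, rfl⟩; exact ((Set.Infinite.natEmbedding B1 hB1inf) n).2
  have hCcount : C.Countable := Set.countable_range _
  have hCinf : C.Infinite := Set.infinite_range_of_injective he0inj
  set D : Set (Set ℕ) := B1 \ C with hDdef
  have hmkD : Cardinal.mk ↥D = Cardinal.continuum := mk_diff_countable hmkB1 hCcount
  obtain ⟨g⟩ : Nonempty (↥D ≃ ↥A1) := Cardinal.eq.mp (hmkD.trans hmkA1.symm)
  set H : ↥D → Set ℕ := fun b => b.1 ∪ (g b).1 with hHdef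
  set 𝒜 : Set (Set ℕ) := C ∪ Set.range H with h𝒜def
  have hHeven : ∀ b : ↥D, H b ∩ Set.range fE = b.1 := by
    intro b
    ext m
    constructor
    · rintro ⟨hm1 | hm1, hm2⟩
      · exact hm1
      · exact absurd hm2 (fun h => range_disj h (hA1sub _ (g b).2 hm1))
    · intro hm
      exact ⟨Or.inl hm, hB1sub _ b.2.1 hm⟩
  have hHinj : Function.Injective H := by
    intro b b' heq
    exact Subtype.ext (by rw [← hHeven b, ← hHeven b', heq])
  have hCnotH : ∀ c ∈ C, ∀ b : ↥D, c ≠ H b := by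
    intro c hc b heq
    obtain ⟨m, hm⟩ := (hA1mem _ (g b).2).nonempty
    exact range_disj (hB1sub c (hCsubB1 hc) (heq ▸ Or.inr hm)) (hA1sub _ (g b).2 hm)
  -- almost disjointness of 𝒜
  have hAmem : ∀ a ∈ 𝒜, a.Infinite := by
    rintro a (hc | ⟨b, rfl⟩)
    · exact hB1mem _ (hCsubB1 hc)
    · exact (hB1mem _ b.2.1).mono Set.subset_union_left
  have hAinf : 𝒜.Infinite := hCinf.mono Set.subset_union_left
  have hADcross : ∀ c ∈ C, ∀ b : ↥D, (c ∩ H b).Finite := by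
    intro c hc b
    rw [hHdef, Set.inter_union_distrib_left]
    refine (hB1ad c (hCsubB1 hc) b.1 b.2.1 (fun h => b.2.2 (h ▸ hc))).union ?_
    refine Set.finite_empty.subset ?_
    rintro m ⟨hm1, hm2⟩
    exact absurd (range_disj (hB1sub c (hCsubB1 hc) hm1) (hA1sub _ (g b).2 hm2)) id
  have hAad : ∀ a ∈ 𝒜, ∀ a' ∈ 𝒜, a ≠ a' → (a ∩ a').Finite := by
    rintro a (hc | ⟨b, rfl⟩) a' (hc' | ⟨b', rfl⟩) hne
    · exact hB1ad a (hCsubB1 hc) a' (hCsubB1 hc') hne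
    · exact hADcross a hc b'
    · rw [Set.inter_comm]; exact hADcross a' hc' b
    · have hb1 : b.1 ≠ b'.1 := fun h => hne (congrArg H (Subtype.ext h))
      have hg1 : (g b).1 ≠ (g b').1 := fun h => hne (congrArg H (g.injective (Subtype.ext h)))
      refine (((hB1ad b.1 b.2.1 b'.1 b'.2.1 hb1).union
        (hA1ad (g b).1 (g b).2 (g b').1 (g b').2 hg1))).subset ?_
      rintro m ⟨hm1 | hm1, hm2 | hm2⟩
      · exact Or.inl ⟨hm1, hm2⟩
      · exact absurd (range_disj (hB1sub _ b.2.1 hm1) (hA1sub _ (g b').2 hm2)) id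
      · exact absurd (range_disj (hB1sub _ b'.2.1 hm2) (hA1sub _ (g b).2 hm1)) id
      · exact Or.inr ⟨hm1, hm2⟩
  -- maximality
  have hAmax : ∀ X : Set ℕ, X.Infinite → ∃ a ∈ 𝒜, (a ∩ X).Infinite := by
    intro X hX
    have hsplit : X ⊆ fE '' (fE ⁻¹' X) ∪ fO '' (fO ⁻¹' X) := by
      intro m hm
      rcases Nat.even_or_odd m with ⟨k, hk⟩ | ⟨k, hk⟩
      · exact Or.inl ⟨k, by rwa [Set.mem_preimage, show fE k = m by simp only [fE]; omega],
          by simp only [fE]; omega⟩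
      · exact Or.inr ⟨k, by rwa [Set.mem_preimage, show fO k = m by simp only [fO]; omega],
          by simp only [fO]; omega⟩
    have hone : (fE ⁻¹' X).Infinite ∨ (fO ⁻¹' X).Infinite := by
      rcases Set.infinite_union.mp (hX.mono hsplit) with h | h
      · exact Or.inl (fun hf => h (hf.image _))
      · exact Or.inr (fun hf => h (hf.image _))
    rcases hone with hpre | hpre
    · obtain ⟨a, ha, hint⟩ := h0max _ hpre
      have himg : (fE '' a ∩ X).Infinite := by
        rw [← Set.image_inter_preimage]
        exact (Set.infinite_image_iff fE_inj.injOn).mpr hint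
      have hbB1 : fE '' a ∈ B1 := ⟨a, ha, rfl⟩
      by_cases hbC : fE '' a ∈ C
      · exact ⟨fE '' a, Or.inl hbC, himg⟩
      · refine ⟨H ⟨fE '' a, hbB1, hbC⟩, Or.inr ⟨_, rfl⟩, himg.mono ?_⟩
        exact Set.inter_subset_inter_left X Set.subset_union_left
    · obtain ⟨a, ha, hint⟩ := h0max _ hpre
      have himg : (fO '' a ∩ X).Infinite := by
        rw [← Set.image_inter_preimage]
        exact (Set.infinite_image_iff fO_inj.injOn).mpr hint
      have hcA1 : fO '' a ∈ A1 := ⟨a, ha, rfl⟩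
      set b : ↥D := g.symm ⟨fO '' a, hcA1⟩ with hbdef
      have hgb : (g b).1 = fO '' a := by rw [hbdef, Equiv.apply_symm_apply]
      refine ⟨H b, Or.inr ⟨b, rfl⟩, himg.mono ?_⟩
      intro m hm
      exact ⟨Or.inr (hgb ▸ hm.1), hm.2⟩
  -- true cardinality
  have hAtc : TrueCardContinuum 𝒜 := by
    intro B
    have hS1 := trueCard_image fE_inj htc0 B
    have hS2 := trueCard_image fO_inj htc0 B
    rw [← hB1def] at hS1
    rw [← hA1def] at hS2
    by_cases hfin1 : (ADRestrict B1 B).Finite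
    · by_cases hfin2 : (ADRestrict A1 B).Finite
      · left
        set K : Set ↥D := {b | b.1 ∈ ADRestrict B1 B ∨ (g b).1 ∈ ADRestrict A1 B} with hKdef
        have hKfin : K.Finite := by
          refine Set.Finite.union (s := {b : ↥D | b.1 ∈ ADRestrict B1 B})
            (t := {b : ↥D | (g b).1 ∈ ADRestrict A1 B}) ?_ ?_ |>.subset ?_
          · exact hfin1.preimage (Subtype.val_injective.injOn)
          · exact hfin2.preimage ((Subtype.val_injective.comp g.injective).injOn)
          · rintro b (hb | hb)
            · exact Or.inl hb
            · exact Or.inr hb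
        refine (hfin1.union (hKfin.image H)).subset ?_
        rintro u ⟨hu | ⟨b, rfl⟩, huB⟩
        · exact Or.inl ⟨hCsubB1 hu, huB⟩
        · refine Or.inr ⟨b, ?_, rfl⟩
          rw [hHdef, Set.union_inter_distrib_right] at huB
          by_contra hbK
          simp only [hKdef, Set.mem_setOf_eq, not_or] at hbK
          have h1 : (b.1 ∩ B).Finite := by
            by_contra hh
            exact hbK.1 ⟨b.2.1, hh⟩
          have h2 : ((g b).1 ∩ B).Finite := by
            by_contra hh
            exact hbK.2 ⟨(g b).2, hh⟩
          exact huB (h1.union h2)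
      · right
        have hm2 : Cardinal.mk ↥(ADRestrict A1 B) = Cardinal.continuum :=
          hS2.resolve_left hfin2
        have hj : ∀ z : ↥(ADRestrict A1 B), H (g.symm ⟨z.1, z.2.1⟩) ∈ ADRestrict 𝒜 B := by
          intro z
          refine ⟨Or.inr ⟨_, rfl⟩, ?_⟩
          have hgz : (g (g.symm ⟨z.1, z.2.1⟩)).1 = z.1 := by rw [Equiv.apply_symm_apply]
          refine z.2.2.mono ?_
          intro m hm
          refine ⟨Or.inr ?_, hm.2⟩
          rw [hgz]
          exact hm.1
        have hjinj : Function.Injective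
            (fun z : ↥(ADRestrict A1 B) => (⟨H (g.symm ⟨z.1, z.2.1⟩), hj z⟩ :
              ↥(ADRestrict 𝒜 B))) := by
          intro z z' heq
          simp only [Subtype.mk.injEq] at heq
          have := g.symm.injective (hHinj heq)
          have h5 : (z : Set ℕ) = z' := congrArg (fun w : ↥A1 => (w : Set ℕ)) this
          exact Subtype.ext h5
        refine le_antisymm (mk_set_nat_le _) ?_
        calc Cardinal.continuum = Cardinal.mk ↥(ADRestrict A1 B) := hm2.symm
          _ ≤ Cardinal.mk ↥(ADRestrict 𝒜 B) := Cardinal.mk_le_of_injective hjinj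
    · right
      have hm1 : Cardinal.mk ↥(ADRestrict B1 B) = Cardinal.continuum :=
        hS1.resolve_left hfin1
      have hmkS1C : Cardinal.mk ↥(ADRestrict B1 B \ C) = Cardinal.continuum :=
        mk_diff_countable hm1 hCcount
      have hj : ∀ z : ↥(ADRestrict B1 B \ C), H ⟨z.1, z.2.1.1, z.2.2⟩ ∈ ADRestrict 𝒜 B := by
        intro z
        refine ⟨Or.inr ⟨_, rfl⟩, z.2.1.2.mono ?_⟩
        exact Set.inter_subset_inter_left B Set.subset_union_left
      have hjinj : Function.Injective
          (fun z : ↥(ADRestrict B1 B \ C) => (⟨H ⟨z.1, z.2.1.1, z.2.2⟩, hj z⟩ :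
            ↥(ADRestrict 𝒜 B))) := by
        intro z z' heq
        simp only [Subtype.mk.injEq] at heq
        have := hHinj heq
        have h5 : (z : Set ℕ) = z' := congrArg (fun w : ↥D => (w : Set ℕ)) this
        exact Subtype.ext h5
      refine le_antisymm (mk_set_nat_le _) ?_
      calc Cardinal.continuum = Cardinal.mk ↥(ADRestrict B1 B \ C) := hmkS1C.symm
        _ ≤ Cardinal.mk ↥(ADRestrict 𝒜 B) := Cardinal.mk_le_of_injective hjinj
  refine ⟨𝒜, ⟨⟨hAinf, hAmem, hAad⟩, hAmax⟩, hAtc, C, Set.subset_union_left, hCcount, hCinf,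
    ⟨e0, he0inj, rfl⟩, Set.range fO, Set.infinite_range_of_injective fO_inj, ?_, ?_⟩
  · intro c hc
    refine Set.finite_empty.subset ?_
    rintro m ⟨hm1, hm2⟩
    exact absurd (range_disj (hB1sub c (hCsubB1 hc) hm1) hm2) id
  · rintro a (hc | ⟨b, rfl⟩) haC
    · exact absurd hc haC
    · refine (hA1mem _ (g b).2).mono ?_
      intro m hm
      exact ⟨Or.inr hm, hA1sub _ (g b).2 hm⟩

/-- the existence of a mad family of true cardinality 𝔠 implies the existence
of a mad family 𝒜 of true cardinality 𝔠 with a countably infinite 𝒞 ⊆ 𝒜 and an infinite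
W ⊆ ℕ such that cl(W) ∩ 𝒜 = 𝒜 ∖ 𝒞; in particular Ψ(𝒜) is not almost-normal. -/
theorem mad_trueCard_machine (h : ∃ 𝒜, MadFamily 𝒜 ∧ TrueCardContinuum 𝒜) :
    ∃ 𝒜, MadFamily 𝒜 ∧ TrueCardContinuum 𝒜 ∧
      (∃ 𝒞 ⊆ 𝒜, 𝒞.Countable ∧ 𝒞.Infinite ∧
        ∃ W : Set ℕ, W.Infinite ∧
          closure (PsiNat 𝒜 W) ∩ PsiSub 𝒜 𝒜 = PsiSub 𝒜 (𝒜 \ 𝒞)) ∧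
      ¬ AlmostNormal (Psi 𝒜) := by
  obtain ⟨A0, hmad0, htc0⟩ := h
  obtain ⟨𝒜, hmad, htc, 𝒞, h𝒞sub, h𝒞c, h𝒞i, ⟨e, he_inj, he_range⟩, W, hWinf, hWC, hWnC⟩ :=
    construction hmad0 htc0
  refine ⟨𝒜, hmad, htc, ⟨𝒞, h𝒞sub, h𝒞c, h𝒞i, W, hWinf, ?_⟩, ?_⟩
  · ext x
    constructor
    · rintro ⟨hcl, a, -, rfl⟩
      have hinf := (pt_mem_closure_psiNat_iff W a).mp hcl
      exact ⟨a, ⟨a.2, fun hC => hinf (hWC a.1 hC)⟩, rfl⟩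
    · rintro ⟨a, ⟨haA, haC⟩, rfl⟩
      exact ⟨(pt_mem_closure_psiNat_iff W a).mpr (hWnC a.1 a.2 haC), a, a.2, rfl⟩
  · intro hAN
    have hdisj : Disjoint (PsiSub 𝒜 𝒞) (closure (PsiNat 𝒜 W)) := by
      rw [Set.disjoint_left]
      rintro x ⟨a, haC, rfl⟩ hcl
      exact ((pt_mem_closure_psiNat_iff W a).mp hcl) (hWC a.1 haC)
    have sep := hAN (PsiSub 𝒜 𝒞) (closure (PsiNat 𝒜 W)) (isClosed_psiSub _ _)
      (regClosed_closure_of_isOpen (isOpen_psiNat _ _)) hdisj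
    exact not_sepOpen hmad h𝒞sub e he_inj he_range hWnC sep

end PsiSpace
end

section
/- If there exists an almost disjoint family of true cardinality 𝔠, then there exists an almost disjoint family ℱ of true cardinality 𝔠 such that Ψ(ℱ) is quasi-normal but not almost-normal. -/
open Set

namespace PsiSpace

/-!
Refine `𝒜` to a family `ℱ` in which every finite collection `𝒲` of `ℱ`-positive sets (sets
meeting infinitely many members of `ℱ` infinitely) is met infinitely by one member of `ℱ`: for each
such `𝒲` and each of `𝔠` tags, glue together the pieces `a_W ∩ W` (`W ∈ 𝒲`) of fresh, pairwise
distinct members `a_W ∈ 𝒜 ↾ W`. Freshness keeps `ℱ` almost disjoint and makes `ℱ`-positive sets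
`𝒜`-positive, and the tags give `ℱ` true cardinality `𝔠`.

A regular closed subset of `Ψ(ℱ)` is determined by its trace `W` on `ℕ`: it contains `a ∈ ℱ` iff
`a ∩ W` is infinite. Hence, by the crossing property, two disjoint π-closed sets cannot both
contain infinitely many points of `ℱ`, while disjoint closed sets one of which contains only finitely many points of `ℱ` are always
separated; so `Ψ(ℱ)` is quasi-normal. It is not almost-normal: take distinct `c n ∈ ℱ` and an
`ℱ`-positive `W` almost disjoint from every `c n`. An open `U ⊇ {c n}` has an `ℱ`-positive trace,
so some member of `ℱ` meets both that trace and `W` infinitely, and it lies in the closure of both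
sets separating `{c n}` from `cl W`.
-/

open scoped Cardinal

universe u

open Cardinal in
theorem _root_.Cardinal.exists_injective_forall_mem {ι α : Type u} (P : ι → Set α)
    (hP : ∀ i, #ι ≤ #(P i)) : ∃ f : ι → α, Function.Injective f ∧ ∀ i, f i ∈ P i := by
  obtain ⟨e⟩ : Nonempty (ι ≃ (#ι).ord.ToType) := Cardinal.eq.1 (mk_ord_toType _).symm
  have step : ∀ t (g : ∀ s, s < t → α), ∃ x ∈ P (e.symm t), ∀ s (hs : s < t), g s hs ≠ x := by
    intro t g
    have hsmall : #(range fun s : Iio t => g s s.2) < #(P (e.symm t)) :=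
      mk_range_le.trans_lt (((mk_Iio_lt t (by rw [mk_ord_toType, Ordinal.type_toType])).trans_eq
        (mk_ord_toType _)).trans_le (hP _))
    obtain ⟨x, hxP, hx⟩ := not_subset.1 fun h => hsmall.not_ge (mk_le_mk_of_subset h)
    exact ⟨x, hxP, fun s hs hsx => hx ⟨⟨s, hs⟩, hsx⟩⟩
  choose F hFP hFne using step
  set f := WellFoundedLT.fix F
  have hf : ∀ t, f t = F t fun s _ => f s := WellFoundedLT.fix_eq F
  have hf_inj : Function.Injective f := by
    intro s t hst
    by_contra hne
    rcases lt_or_gt_of_ne hne with h | h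
    · exact hFne t (fun s _ => f s) s h (hst.trans (hf t))
    · exact hFne s (fun s _ => f s) t h (hst.symm.trans (hf s))
  refine ⟨f ∘ e, hf_inj.comp e.injective, fun i => ?_⟩
  rw [Function.comp_apply, hf]
  simpa using hFP (e i) fun s _ => f s

theorem ADRestrict_univ {𝒜 : Set (Set ℕ)} (h : AlmostDisjoint 𝒜) : ADRestrict 𝒜 univ = 𝒜 :=
  Set.ext fun a => ⟨And.left, fun ha => ⟨ha, by simpa using h.2.1 a ha⟩⟩

theorem AlmostDisjoint.univ_mem_IPlus {𝒜 : Set (Set ℕ)} (h : AlmostDisjoint 𝒜) :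
    univ ∈ IPlus 𝒜 := by
  simpa [IPlus, ADRestrict_univ h] using h.1

theorem AlmostDisjoint.exists_injective_inter_finite {𝒜 : Set (Set ℕ)} (h : AlmostDisjoint 𝒜) :
    ∃ c : ℕ → Set ℕ, Function.Injective c ∧ (∀ n, c n ∈ 𝒜) ∧
      ∃ W ∈ IPlus 𝒜, ∀ n, (c n ∩ W).Finite := by
  set e := h.1.natEmbedding
  have he_inj : Function.Injective fun n => (e n : Set ℕ) :=
    Subtype.val_injective.comp e.injective
  set c := fun n => (e (2 * n) : Set ℕ)
  set d := fun n => (e (2 * n + 1) : Set ℕ)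
  have hcd : ∀ k n, (c k ∩ d n).Finite := fun k n =>
    h.2.2 _ (e _).2 _ (e _).2 (he_inj.ne (by omega))
  -- `d n` keeps all but finitely many of its points in `W`, while `c k` meets only
  -- `d 0, …, d (k - 1)` there
  set W := ⋃ n, d n \ ⋃ k ∈ Finset.range (n + 1), c k
  refine ⟨c, he_inj.comp fun m n hmn => by omega, fun n => (e _).2, W, ?_, fun k => ?_⟩
  · refine infinite_of_injective_forall_mem (f := d) (he_inj.comp fun m n hmn => by omega)
      fun n => ⟨(e _).2, ?_⟩
    have hsmall : (d n ∩ ⋃ k ∈ Finset.range (n + 1), c k).Finite := by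
      rw [inter_iUnion₂]
      exact (Finset.finite_toSet _).biUnion fun k _ => by rw [inter_comm]; exact hcd k n
    refine ((h.2.1 _ (e _).2).sdiff hsmall).mono fun x hx => ⟨hx.1, mem_iUnion.2 ⟨n, hx.1, ?_⟩⟩
    exact fun hxc => hx.2 ⟨hx.1, hxc⟩
  · refine ((Finset.finite_toSet (Finset.range k)).biUnion fun n _ => hcd k n).subset ?_
    rintro x ⟨hxc, hxW⟩
    obtain ⟨n, hxd, hxn⟩ := mem_iUnion.1 hxW
    have hnk : n < k := by
      by_contra hkn
      exact hxn (mem_biUnion (Finset.mem_range.2 (by omega)) hxc)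
    exact mem_biUnion (Finset.mem_range.2 hnk) ⟨hxc, hxd⟩

theorem RegClosed.isClosed {X : Type*} [TopologicalSpace X] {A : Set X} (h : RegClosed A) :
    IsClosed A :=
  h ▸ isClosed_closure

theorem _root_.IsOpen.regClosed_closure {X : Type*} [TopologicalSpace X] {U : Set X}
    (hU : IsOpen U) : RegClosed (closure U) := by
  simpa only [RegClosed, hU.interior_eq] using closure_interior_idem (s := U)

theorem PiClosed.isClosed {X : Type*} [TopologicalSpace X] {A : Set X} (h : PiClosed A) :
    IsClosed A := by
  obtain ⟨S, hS, rfl⟩ := h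
  exact isClosed_sInter fun B hB => (hS B hB).isClosed

theorem SepOpen.symm {X : Type*} [TopologicalSpace X] {A B : Set X} (h : SepOpen A B) :
    SepOpen B A :=
  let ⟨U, V, hU, hV, hAU, hBV, hUV⟩ := h
  ⟨V, U, hV, hU, hBV, hAU, hUV.symm⟩

namespace Psi

variable {ℱ : Set (Set ℕ)}

theorem nat_injective : Function.Injective (Psi.nat : ℕ → Psi ℱ) := Sum.inl_injective

theorem nat_ne_pt (n : ℕ) (a : {a : Set ℕ // a ∈ ℱ}) : Psi.nat n ≠ Psi.pt a := Sum.inl_ne_inr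

theorem isOpen_iff {U : Set (Psi ℱ)} :
    IsOpen U ↔ ∀ a, Psi.pt a ∈ U → (a.1 \ Psi.nat ⁻¹' U).Finite :=
  Iff.rfl

theorem infinite_inter_preimage_nat (hℱ : ∀ a ∈ ℱ, a.Infinite) {U : Set (Psi ℱ)}
    (hU : IsOpen U) {a : {a : Set ℕ // a ∈ ℱ}} (ha : Psi.pt a ∈ U) :
    (a.1 ∩ Psi.nat ⁻¹' U).Infinite := by
  simpa only [sdiff_sdiff_right_self] using (hℱ a.1 a.2).sdiff (isOpen_iff.1 hU a ha)

theorem finite_inter_preimage_nat {A : Set (Psi ℱ)} (hA : IsClosed A)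
    {a : {a : Set ℕ // a ∈ ℱ}} (ha : Psi.pt a ∉ A) : (a.1 ∩ Psi.nat ⁻¹' A).Finite := by
  simpa only [preimage_compl, sdiff_compl] using isOpen_iff.1 hA.isOpen_compl a ha

theorem isOpen_image_nat (W : Set ℕ) : IsOpen (Psi.nat '' W : Set (Psi ℱ)) := by
  rintro a ⟨n, -, hn⟩
  exact absurd hn (nat_ne_pt n a)

theorem isClosed_of_subset_range_pt {S : Set (Psi ℱ)} (hS : S ⊆ range Psi.pt) : IsClosed S := by
  refine isOpen_compl_iff.1 fun a _ => finite_empty.subset ?_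
  rintro n ⟨-, hn⟩
  obtain ⟨b, hb⟩ := hS (not_not.1 hn)
  exact nat_ne_pt n b hb.symm

theorem preimage_nat_interior (S : Set (Psi ℱ)) :
    Psi.nat ⁻¹' interior S = Psi.nat ⁻¹' S :=
  (preimage_mono interior_subset).antisymm <| image_subset_iff.1 <|
    interior_maximal (image_preimage_subset _ _) (isOpen_image_nat _)

theorem pt_mem_closure_iff (S : Set (Psi ℱ)) (a : {a : Set ℕ // a ∈ ℱ}) :
    Psi.pt a ∈ closure S ↔ Psi.pt a ∈ S ∨ (a.1 ∩ Psi.nat ⁻¹' S).Infinite := by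
  constructor
  · set T := S ∪ {x | ∃ b, x = Psi.pt b ∧ (b.1 ∩ Psi.nat ⁻¹' S).Infinite}
    have hT : IsClosed T := by
      refine isOpen_compl_iff.1 fun b hb => ?_
      have hbS : (b.1 ∩ Psi.nat ⁻¹' S).Finite := not_infinite.1 fun h => hb (Or.inr ⟨b, rfl, h⟩)
      refine hbS.subset fun n hn => ⟨hn.1, ?_⟩
      rcases not_not.1 hn.2 with h | ⟨c, hc, -⟩
      · exact h
      · exact absurd hc (nat_ne_pt n c)
    intro ha
    rcases closure_minimal subset_union_left hT ha with h | ⟨b, hb, hbS⟩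
    · exact Or.inl h
    · exact Or.inr (Sum.inr_injective hb ▸ hbS)
  · rintro (h | h)
    · exact subset_closure h
    refine mem_closure_iff.2 fun U hU haU => ?_
    obtain ⟨n, ⟨hna, hnS⟩, hnU⟩ := (h.sdiff (hU a haU)).nonempty
    exact ⟨Psi.nat n, not_not.1 fun h => hnU ⟨hna, h⟩, hnS⟩

theorem pt_mem_closure_image_nat_iff (W : Set ℕ) (a : {a : Set ℕ // a ∈ ℱ}) :
    Psi.pt a ∈ closure (Psi.nat '' W) ↔ (a.1 ∩ W).Infinite := by
  rw [pt_mem_closure_iff, preimage_image_eq _ nat_injective]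
  exact or_iff_right fun ⟨n, _, hn⟩ => nat_ne_pt n a hn

theorem pt_mem_iff_of_regClosed (hℱ : ∀ a ∈ ℱ, a.Infinite) {R : Set (Psi ℱ)} (hR : RegClosed R)
    (a : {a : Set ℕ // a ∈ ℱ}) : Psi.pt a ∈ R ↔ (a.1 ∩ Psi.nat ⁻¹' R).Infinite := by
  conv_lhs => rw [← hR]
  rw [pt_mem_closure_iff, preimage_nat_interior, or_iff_right_iff_imp]
  intro ha
  simpa only [preimage_nat_interior] using infinite_inter_preimage_nat hℱ isOpen_interior ha

theorem exists_finset_of_piClosed (hℱ : ∀ a ∈ ℱ, a.Infinite) {P : Set (Psi ℱ)} (hP : PiClosed P) :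
    ∃ 𝒲 : Finset (Set ℕ), ∀ a, Psi.pt a ∈ P ↔ ∀ W ∈ 𝒲, (a.1 ∩ W).Infinite := by
  classical
  obtain ⟨S, hS, rfl⟩ := hP
  refine ⟨S.image (Psi.nat ⁻¹' ·), fun a => ?_⟩
  simp only [mem_sInter, Finset.mem_coe, Finset.forall_mem_image]
  exact forall₂_congr fun R hR => pt_mem_iff_of_regClosed hℱ (hS R hR) a

def ofParts (X : Set ℕ) (G : Set {a : Set ℕ // a ∈ ℱ}) : Set (Psi ℱ) :=
  {x | Sum.elim (· ∈ X) (· ∈ G) x}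

theorem isOpen_ofParts {X : Set ℕ} {G : Set {a : Set ℕ // a ∈ ℱ}}
    (h : ∀ a ∈ G, (a.1 \ X).Finite) : IsOpen (ofParts X G) :=
  h

theorem subset_ofParts {S : Set (Psi ℱ)} {X : Set ℕ} {G : Set {a : Set ℕ // a ∈ ℱ}}
    (hX : Psi.nat ⁻¹' S ⊆ X) (hG : Psi.pt ⁻¹' S ⊆ G) : S ⊆ ofParts X G := by
  rintro (n | a) hx
  exacts [hX hx, hG hx]

theorem disjoint_ofParts {X X' : Set ℕ} {G G' : Set {a : Set ℕ // a ∈ ℱ}}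
    (hX : Disjoint X X') (hG : Disjoint G G') : Disjoint (ofParts X G) (ofParts X' G') := by
  refine disjoint_left.2 ?_
  rintro (n | a) h h'
  exacts [disjoint_left.1 hX h h', disjoint_left.1 hG h h']

theorem sepOpen_of_finite (hℱ : AlmostDisjoint ℱ) {A B : Set (Psi ℱ)} (hA : IsClosed A)
    (hB : IsClosed B) (hAB : Disjoint A B) (hfin : (Psi.pt ⁻¹' B).Finite) : SepOpen A B := by
  have hAB' : Disjoint (Psi.pt ⁻¹' A) (Psi.pt ⁻¹' B) := hAB.preimage _
  set Y := Psi.nat ⁻¹' B ∪ ((⋃ b ∈ Psi.pt ⁻¹' B, b.1) \ Psi.nat ⁻¹' A)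
  refine ⟨ofParts Yᶜ (Psi.pt ⁻¹' A), ofParts Y (Psi.pt ⁻¹' B), isOpen_ofParts fun a ha => ?_,
    isOpen_ofParts fun b hb => ?_, subset_ofParts ?_ subset_rfl, subset_ofParts subset_union_left
    subset_rfl, disjoint_ofParts disjoint_compl_left hAB'⟩
  · rw [sdiff_compl]
    refine ((finite_inter_preimage_nat hB (disjoint_left.1 hAB ha)).union
      (hfin.biUnion fun b hb => hℱ.2.2 _ a.2 _ b.2 fun h =>
        disjoint_left.1 hAB' ha (Subtype.ext h ▸ hb))).subset ?_
    rintro n ⟨hna, hnB | ⟨hn, -⟩⟩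
    · exact Or.inl ⟨hna, hnB⟩
    · obtain ⟨b, hb, hnb⟩ := mem_iUnion₂.1 hn
      exact Or.inr (mem_biUnion hb ⟨hna, hnb⟩)
  · refine (finite_inter_preimage_nat hA (disjoint_right.1 hAB hb)).subset fun n hn => ⟨hn.1, ?_⟩
    exact not_not.1 fun hnA => hn.2 (Or.inr ⟨mem_biUnion hb hn.1, hnA⟩)
  · rintro n hnA (hnB | ⟨-, hn⟩)
    exacts [disjoint_left.1 hAB hnA hnB, hn hnA]

theorem subset_IPlus_of_infinite {S : Set (Psi ℱ)} {𝒲 : Finset (Set ℕ)}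
    (hS : ∀ a, Psi.pt a ∈ S → ∀ W ∈ 𝒲, (a.1 ∩ W).Infinite) (hinf : (Psi.pt ⁻¹' S).Infinite) :
    ↑𝒲 ⊆ IPlus ℱ := fun W hW =>
  (hinf.image Subtype.val_injective.injOn).mono <| by
    rintro _ ⟨a, ha, rfl⟩
    exact ⟨a.2, hS a ha W hW⟩

end Psi

def FinitelyCrossing (ℱ : Set (Set ℕ)) : Prop :=
  ∀ 𝒲 : Finset (Set ℕ), ↑𝒲 ⊆ IPlus ℱ → ∃ e ∈ ℱ, ∀ W ∈ 𝒲, (e ∩ W).Infinite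

section Crossing

variable {ℱ : Set (Set ℕ)}

theorem quasiNormal_of_finitelyCrossing (hℱ : AlmostDisjoint ℱ) (hcross : FinitelyCrossing ℱ) :
    QuasiNormal (Psi ℱ) := by
  classical
  intro P Q hP hQ hPQ
  by_cases hQfin : (Psi.pt ⁻¹' Q).Finite
  · exact Psi.sepOpen_of_finite hℱ hP.isClosed hQ.isClosed hPQ hQfin
  by_cases hPfin : (Psi.pt ⁻¹' P).Finite
  · exact (Psi.sepOpen_of_finite hℱ hQ.isClosed hP.isClosed hPQ.symm hPfin).symm
  obtain ⟨𝒲, h𝒲⟩ := Psi.exists_finset_of_piClosed hℱ.2.1 hP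
  obtain ⟨𝒱, h𝒱⟩ := Psi.exists_finset_of_piClosed hℱ.2.1 hQ
  obtain ⟨e, heℱ, he⟩ := hcross (𝒲 ∪ 𝒱) <| by
    rw [Finset.coe_union]
    exact union_subset (Psi.subset_IPlus_of_infinite (fun a => (h𝒲 a).1) hPfin)
      (Psi.subset_IPlus_of_infinite (fun a => (h𝒱 a).1) hQfin)
  exact (disjoint_left.1 hPQ ((h𝒲 ⟨e, heℱ⟩).2 fun W hW => he W (Finset.mem_union_left _ hW))
    ((h𝒱 ⟨e, heℱ⟩).2 fun W hW => he W (Finset.mem_union_right _ hW))).elim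

theorem not_almostNormal_of_finitelyCrossing (hℱ : AlmostDisjoint ℱ)
    (hcross : FinitelyCrossing ℱ) : ¬ AlmostNormal (Psi ℱ) := by
  classical
  intro hN
  obtain ⟨c, hc_inj, hcℱ, W, hW, hcW⟩ := hℱ.exists_injective_inter_finite
  obtain ⟨U, V, hU, hV, hCU, hDV, hUV⟩ :=
    hN (range fun n => Psi.pt ⟨c n, hcℱ n⟩) (closure (Psi.nat '' W))
      (Psi.isClosed_of_subset_range_pt (range_subset_iff.2 fun n => mem_range_self _))
      (Psi.isOpen_image_nat W).regClosed_closure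
      (disjoint_left.2 <| by
        rintro _ ⟨n, rfl⟩ h
        exact (Psi.pt_mem_closure_image_nat_iff W _).1 h (hcW n))
  have hX : Psi.nat ⁻¹' U ∈ IPlus ℱ := infinite_of_injective_forall_mem hc_inj fun n =>
    ⟨hcℱ n, Psi.infinite_inter_preimage_nat hℱ.2.1 hU (hCU (mem_range_self n))⟩
  obtain ⟨e, heℱ, he⟩ := hcross {Psi.nat ⁻¹' U, W} <| by
    simp only [Finset.coe_insert, Finset.coe_singleton, insert_subset_iff, singleton_subset_iff]
    exact ⟨hX, hW⟩
  have heV : Psi.pt ⟨e, heℱ⟩ ∈ V := hDV <| (Psi.pt_mem_closure_image_nat_iff W _).2 <|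
    he W (Finset.mem_insert_of_mem (Finset.mem_singleton_self _))
  exact he _ (Finset.mem_insert_self _ _) ((Psi.isOpen_iff.1 hV _ heV).subset fun n hn =>
    ⟨hn.1, fun hnV => disjoint_left.1 hUV hn.2 hnV⟩)

end Crossing

/-- `src (𝒲, ξ, W)` is the member of `𝒜` spent on the set `W` at stage `(𝒲, ξ)`; the tags
`ξ : Set ℕ` give every finite `𝒲` continuum many stages. -/
structure Selector (𝒜 : Set (Set ℕ)) where
  src : Finset (Set ℕ) × Set ℕ × Set ℕ → Set ℕ
  injective : Function.Injective src
  mem : ∀ i, src i ∈ 𝒜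
  inter_infinite : ∀ i, i.2.2 ∈ IPlus 𝒜 → (src i ∩ i.2.2).Infinite

open Cardinal in
theorem exists_selector {𝒜 : Set (Set ℕ)} (h𝒜 : AlmostDisjoint 𝒜)
    (htc : TrueCardContinuum 𝒜) : Nonempty (Selector 𝒜) := by
  classical
  let pos : Set ℕ → Set ℕ := fun W => if W ∈ IPlus 𝒜 then W else Set.univ
  have hpos : ∀ W, pos W ∈ IPlus 𝒜 := fun W => by
    by_cases hW : W ∈ IPlus 𝒜
    · simp [pos, hW]
    · simpa [pos, hW] using h𝒜.univ_mem_IPlus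
  have hι : #(Finset (Set ℕ) × Set ℕ × Set ℕ) = 𝔠 := by
    simp only [mk_prod, mk_finset_of_infinite, mk_set_nat, lift_id,
      mul_eq_self aleph0_le_continuum]
  obtain ⟨f, hf_inj, hf⟩ := exists_injective_forall_mem (fun i => ADRestrict 𝒜 (pos i.2.2))
    fun i => hι.trans_le ((htc _).resolve_left (hpos _)).ge
  refine ⟨⟨f, hf_inj, fun i => (hf i).1, fun i hi => ?_⟩⟩
  simpa [pos, hi] using (hf i).2

namespace Selector

variable {𝒜 : Set (Set ℕ)} (σ : Selector 𝒜)

def amalgam (𝒲 : Finset (Set ℕ)) (ξ : Set ℕ) : Set ℕ :=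
  ⋃ W ∈ 𝒲, σ.src (𝒲, ξ, W) ∩ W

def family : Set (Set ℕ) :=
  {x | ∃ 𝒲 ξ, 𝒲.Nonempty ∧ ↑𝒲 ⊆ IPlus 𝒜 ∧ σ.amalgam 𝒲 ξ = x}

theorem amalgam_inter_subset (𝒲 : Finset (Set ℕ)) (ξ B : Set ℕ) :
    σ.amalgam 𝒲 ξ ∩ B ⊆ ⋃ W ∈ 𝒲, σ.src (𝒲, ξ, W) ∩ B := by
  rintro n ⟨hn, hnB⟩
  obtain ⟨W, hW, hnW⟩ := mem_iUnion₂.1 hn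
  exact mem_biUnion hW ⟨hnW.1, hnB⟩

theorem infinite_amalgam_inter {𝒲 : Finset (Set ℕ)} {W : Set ℕ} (hW : W ∈ 𝒲)
    (hW' : W ∈ IPlus 𝒜) (ξ : Set ℕ) : (σ.amalgam 𝒲 ξ ∩ W).Infinite :=
  (σ.inter_infinite (𝒲, ξ, W) hW').mono fun _ hn => ⟨mem_iUnion₂.2 ⟨W, hW, hn⟩, hn.2⟩

theorem finite_amalgam_inter_amalgam (h𝒜 : AlmostDisjoint 𝒜) {𝒲 𝒱 : Finset (Set ℕ)}
    {ξ η : Set ℕ} (hne : (𝒲, ξ) ≠ (𝒱, η)) :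
    (σ.amalgam 𝒲 ξ ∩ σ.amalgam 𝒱 η).Finite := by
  have hsub : σ.amalgam 𝒲 ξ ∩ σ.amalgam 𝒱 η ⊆
      ⋃ W ∈ 𝒲, ⋃ V ∈ 𝒱, σ.src (𝒲, ξ, W) ∩ σ.src (𝒱, η, V) := by
    rintro n ⟨hn, hn'⟩
    obtain ⟨W, hW, hnW⟩ := mem_iUnion₂.1 hn
    obtain ⟨V, hV, hnV⟩ := mem_iUnion₂.1 hn'
    exact mem_iUnion₂.2 ⟨W, hW, mem_iUnion₂.2 ⟨V, hV, hnW.1, hnV.1⟩⟩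
  refine (𝒲.finite_toSet.biUnion fun W _ => 𝒱.finite_toSet.biUnion fun V _ => ?_).subset hsub
  refine h𝒜.2.2 _ (σ.mem _) _ (σ.mem _) (σ.injective.ne fun h => hne ?_)
  simp only [Prod.mk.injEq] at h ⊢
  exact ⟨h.1, h.2.1⟩

theorem eq_of_amalgam_eq (h𝒜 : AlmostDisjoint 𝒜) {𝒲 𝒱 : Finset (Set ℕ)} {ξ η W : Set ℕ}
    (hW : W ∈ 𝒲) (hW' : W ∈ IPlus 𝒜) (h : σ.amalgam 𝒲 ξ = σ.amalgam 𝒱 η) : (𝒲, ξ) = (𝒱, η) := by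
  by_contra hne
  have hfin := σ.finite_amalgam_inter_amalgam h𝒜 hne
  rw [← h, inter_self] at hfin
  exact σ.infinite_amalgam_inter hW hW' ξ (hfin.subset inter_subset_left)

theorem IPlus_family_subset : IPlus σ.family ⊆ IPlus 𝒜 := by
  intro B hB h𝒜B
  refine hB ((h𝒜B.preimage σ.injective.injOn).image (fun i => σ.amalgam i.1 i.2.1) |>.subset ?_)
  rintro _ ⟨⟨𝒲, ξ, -, -, rfl⟩, hB⟩
  obtain ⟨W, hW, hWB⟩ : ∃ W ∈ 𝒲, (σ.src (𝒲, ξ, W) ∩ B).Infinite := by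
    by_contra! h
    exact hB ((𝒲.finite_toSet.biUnion h).subset (σ.amalgam_inter_subset 𝒲 ξ B))
  exact ⟨(𝒲, ξ, W), ⟨σ.mem _, hWB⟩, rfl⟩

open Cardinal in
theorem mk_ADRestrict_family (h𝒜 : AlmostDisjoint 𝒜) {B : Set ℕ} (hB : B ∈ IPlus 𝒜) :
    #(ADRestrict σ.family B) = 𝔠 := by
  refine (mk_subtype_le _).trans_eq mk_set_nat |>.antisymm ?_
  have hmem : ∀ ξ, σ.amalgam {B} ξ ∈ ADRestrict σ.family B := fun ξ =>
    ⟨⟨{B}, ξ, Finset.singleton_nonempty B, by simpa using hB, rfl⟩,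
      σ.infinite_amalgam_inter (Finset.mem_singleton_self B) hB ξ⟩
  have hinj : Function.Injective fun ξ => σ.amalgam {B} ξ := fun ξ η h =>
    (Prod.ext_iff.1 (σ.eq_of_amalgam_eq h𝒜 (Finset.mem_singleton_self B) hB h)).2
  rw [← mk_set_nat, ← mk_range_eq _ hinj]
  exact mk_le_mk_of_subset (range_subset_iff.2 hmem)

theorem almostDisjoint (h𝒜 : AlmostDisjoint 𝒜) : AlmostDisjoint σ.family := by
  refine ⟨?_, ?_, ?_⟩
  · refine Infinite.mono (s := ADRestrict σ.family univ) (fun _ h => h.1) ?_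
    rw [← infinite_coe_iff, Cardinal.infinite_iff, σ.mk_ADRestrict_family h𝒜 h𝒜.univ_mem_IPlus]
    exact Cardinal.aleph0_le_continuum
  · rintro _ ⟨𝒲, ξ, ⟨W, hW⟩, h𝒲, rfl⟩
    exact (σ.infinite_amalgam_inter hW (h𝒲 hW) ξ).mono inter_subset_left
  · rintro _ ⟨𝒲, ξ, -, -, rfl⟩ _ ⟨𝒱, η, -, -, rfl⟩ hne
    exact σ.finite_amalgam_inter_amalgam h𝒜 fun h =>
      hne (congrArg (fun p : Finset (Set ℕ) × Set ℕ => σ.amalgam p.1 p.2) h)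

theorem trueCardContinuum (h𝒜 : AlmostDisjoint 𝒜) : TrueCardContinuum σ.family := fun B =>
  (ADRestrict σ.family B).finite_or_infinite.imp_right fun hB =>
    σ.mk_ADRestrict_family h𝒜 (σ.IPlus_family_subset hB)

theorem finitelyCrossing (h𝒜 : AlmostDisjoint 𝒜) : FinitelyCrossing σ.family := by
  intro 𝒲 h𝒲
  rcases 𝒲.eq_empty_or_nonempty with rfl | hne
  · obtain ⟨e, he⟩ := (σ.almostDisjoint h𝒜).1.nonempty
    exact ⟨e, he, by simp⟩
  · have h𝒲' : ↑𝒲 ⊆ IPlus 𝒜 := h𝒲.trans σ.IPlus_family_subset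
    exact ⟨σ.amalgam 𝒲 ∅, ⟨𝒲, ∅, hne, h𝒲', rfl⟩,
      fun W hW => σ.infinite_amalgam_inter hW (h𝒲' hW) ∅⟩

end Selector

/-- if there exists an almost disjoint family of true cardinality 𝔠, then there
is an almost disjoint family ℱ of true cardinality 𝔠 with Ψ(ℱ) quasi-normal but not
almost-normal. -/
theorem exists_quasiNormal_not_almostNormal
    (h : ∃ 𝒜, AlmostDisjoint 𝒜 ∧ TrueCardContinuum 𝒜) :
    ∃ ℱ, AlmostDisjoint ℱ ∧ TrueCardContinuum ℱ ∧
      QuasiNormal (Psi ℱ) ∧ ¬ AlmostNormal (Psi ℱ) := by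
  obtain ⟨𝒜, h𝒜, htc⟩ := h
  obtain ⟨σ⟩ := exists_selector h𝒜 htc
  have hℱ := σ.almostDisjoint h𝒜
  exact ⟨σ.family, hℱ, σ.trueCardContinuum h𝒜,
    quasiNormal_of_finitelyCrossing hℱ (σ.finitelyCrossing h𝒜),
    not_almostNormal_of_finitelyCrossing hℱ (σ.finitelyCrossing h𝒜)⟩

end PsiSpace
end
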